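/- Let L be a field of characteristic not equal to 2, let a_1, ..., a_k ∈ L with α_s² = a_s for α_s in the algebraic closure, and suppose [L(α_1,...,α_k) : L] = 2^k. If γ ∈ L(α_1,...,α_k) \ L satisfies γ² ∈ L, then there exists a subset I ⊆ {1,...,k} such that γ · ∏_{s∈I} α_s ∈ L. -/

import Mathlib

/-!
Induct on the number of square roots. Write `K = L(α_s : s ≠ i)` and `β = α_i`; the degree
hypothesis forces `[K(β) : K] = 2`, so every element of `K(β)` is `x + yβ` with `x, y ∈ K`.
If `(x + yβ)² = x² + y²β² + 2xyβ` lies in `K` then `2xy = 0`, so either `γ ∈ K` or `γβ ∈ K`;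
in both cases the element has square in `L` and the induction hypothesis applies to it.
-/

open IntermediateField Module Polynomial

section Quadratic

variable {K E : Type*} [Field K] [Field E] [Algebra K E] {β : E} {b : K}

lemma finrank_adjoin_simple_le_two (hβ : β ^ 2 = algebraMap K E b) : finrank K K⟮β⟯ ≤ 2 := by
  have hq : (X ^ 2 - C b).Monic := monic_X_pow_sub_C b two_ne_zero
  have hroot : aeval β (X ^ 2 - C b) = 0 := by simp [hβ]
  rw [adjoin.finrank ⟨_, hq, hroot⟩, ← natDegree_X_pow_sub_C (n := 2) (r := b)]
  exact natDegree_le_of_dvd (minpoly.dvd K β hroot) hq.ne_zero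

lemma exists_eq_add_mul_of_mem_adjoin_simple (hβ : β ^ 2 = algebraMap K E b) {γ : E}
    (hγ : γ ∈ K⟮β⟯) : ∃ x y : K, γ = algebraMap K E x + algebraMap K E y * β := by
  have hq : (X ^ 2 - C b).Monic := monic_X_pow_sub_C b two_ne_zero
  have hroot : aeval β (X ^ 2 - C b) = 0 := by simp [hβ]
  have hint : IsIntegral K β := ⟨_, hq, hroot⟩
  rw [← mem_toSubalgebra, adjoin_simple_toSubalgebra_of_isAlgebraic hint.isAlgebraic,
    Algebra.adjoin_singleton_eq_range_aeval] at hγ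
  obtain ⟨p, rfl⟩ := hγ
  change ∃ x y : K, aeval β p = _
  have hr : (p %ₘ (X ^ 2 - C b)).natDegree ≤ 1 := by
    have hq1 : X ^ 2 - C b ≠ 1 := fun h ↦ by
      simpa [h] using natDegree_X_pow_sub_C (n := 2) (r := b)
    have := natDegree_modByMonic_lt p hq hq1
    rw [natDegree_X_pow_sub_C] at this
    omega
  rw [← aeval_modByMonic_eq_self_of_root hroot]
  generalize p %ₘ (X ^ 2 - C b) = r at hr ⊢
  rw [eq_X_add_C_of_natDegree_le_one hr]
  exact ⟨r.coeff 0, r.coeff 1, by simp only [map_add, map_mul, aeval_C, aeval_X]; ring⟩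

lemma mem_range_or_mul_mem_range_of_sq_mem_range (h2 : ringChar K ≠ 2)
    (hβ : β ^ 2 = algebraMap K E b) (hβK : β ∉ Set.range (algebraMap K E)) {γ : E}
    (hγ : γ ∈ K⟮β⟯) (hγsq : γ ^ 2 ∈ Set.range (algebraMap K E)) :
    γ ∈ Set.range (algebraMap K E) ∨ γ * β ∈ Set.range (algebraMap K E) := by
  obtain ⟨x, y, rfl⟩ := exists_eq_add_mul_of_mem_adjoin_simple hβ hγ
  obtain ⟨c, hc⟩ := hγsq
  have hxy : x * y = 0 := by
    by_contra hxy
    have h2xy : 2 * x * y ≠ 0 := by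
      rw [mul_assoc]
      exact mul_ne_zero (Ring.two_ne_zero h2) hxy
    refine hβK ⟨(c - x ^ 2 - y ^ 2 * b) / (2 * x * y), ?_⟩
    rw [map_div₀, div_eq_iff (by simpa using h2xy)]
    simp only [map_sub, map_mul, map_pow, map_ofNat]
    linear_combination hc + (algebraMap K E y) ^ 2 * hβ
  rcases mul_eq_zero.mp hxy with rfl | rfl
  · exact Or.inr ⟨y * b, by simp only [map_mul, ← hβ, map_zero, zero_add]; ring⟩
  · exact Or.inl ⟨x, by simp⟩

end Quadratic

section Multiquadratic

variable {L E ι : Type*} [Field L] [Field E] [Algebra L E]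

lemma finrank_adjoin_insert (S : Set E) (x : E) :
    finrank L (adjoin L (insert x S)) =
      finrank L (adjoin L S) * finrank (adjoin L S) (adjoin L S)⟮x⟯ := by
  rw [← Set.union_singleton, ← adjoin_adjoin_left, finrank_mul_finrank]
  rfl

lemma sq_eq_algebraMap_adjoin {α : E} {a : L} (hsq : α ^ 2 = algebraMap L E a) (S : Set E) :
    α ^ 2 = algebraMap (adjoin L S) E (algebraMap L (adjoin L S) a) := by
  rw [← IsScalarTower.algebraMap_apply, hsq]

lemma finrank_adjoin_image_le {α : ι → E} {a : ι → L}
    (hsq : ∀ i, α i ^ 2 = algebraMap L E (a i)) (s : Finset ι) :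
    finrank L (adjoin L (α '' s)) ≤ 2 ^ s.card := by
  classical
  induction s using Finset.induction_on with
  | empty =>
    rw [Finset.coe_empty, Set.image_empty, adjoin_empty, IntermediateField.finrank_bot]
    exact Nat.one_le_two_pow
  | insert i s hi ih =>
    rw [Finset.coe_insert, Set.image_insert_eq, finrank_adjoin_insert,
      Finset.card_insert_of_notMem hi, pow_succ]
    exact Nat.mul_le_mul ih (finrank_adjoin_simple_le_two (sq_eq_algebraMap_adjoin (hsq i) _))

theorem exists_subset_mul_prod_mem_range {α : ι → E} {a : ι → L}
    (hsq : ∀ i, α i ^ 2 = algebraMap L E (a i)) (h2 : ringChar L ≠ 2) (s : Finset ι)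
    (hdeg : finrank L (adjoin L (α '' s)) = 2 ^ s.card) {γ : E} (hγ : γ ∈ adjoin L (α '' s))
    (hγsq : γ ^ 2 ∈ Set.range (algebraMap L E)) :
    ∃ I ⊆ s, γ * ∏ i ∈ I, α i ∈ Set.range (algebraMap L E) := by
  classical
  induction s using Finset.induction_on generalizing γ with
  | empty =>
    simp only [Finset.coe_empty, Set.image_empty, adjoin_empty, mem_bot] at hγ
    exact ⟨∅, subset_rfl, by simpa using hγ⟩
  | insert i s hi ih =>
    set K := adjoin L (α '' s)
    have hsqK := sq_eq_algebraMap_adjoin (hsq i) (α '' s)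
    rw [Finset.coe_insert, Set.image_insert_eq] at hγ hdeg
    rw [finrank_adjoin_insert, Finset.card_insert_of_notMem hi, pow_succ] at hdeg
    obtain ⟨hK, hKβ⟩ := (mul_eq_mul_iff_eq_and_eq_of_pos' (finrank_adjoin_image_le hsq s)
      (finrank_adjoin_simple_le_two hsqK) (by positivity)
      (Nat.pos_of_ne_zero fun h ↦ by simp [h] at hdeg)).mp hdeg
    have hβK : α i ∉ Set.range (algebraMap K E) := by
      rw [← mem_bot, ← finrank_adjoin_simple_eq_one_iff, hKβ]
      decide
    have hγK : γ ∈ K⟮α i⟯ := by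
      rwa [← Set.union_singleton, ← adjoin_adjoin_left, mem_restrictScalars] at hγ
    have hrange : Set.range (algebraMap L E) ⊆ Set.range (algebraMap K E) := by
      rw [← adjoin_eq_range_algebraMap_adjoin]
      exact adjoin.range_algebraMap_subset L _
    rcases mem_range_or_mul_mem_range_of_sq_mem_range (Algebra.ringChar_eq L K ▸ h2) hsqK hβK
      hγK (hrange hγsq) with hγ | hγβ
    · obtain ⟨I, hI, hγI⟩ := ih hK (by simpa using hγ) hγsq
      exact ⟨I, hI.trans (Finset.subset_insert i s), hγI⟩
    · obtain ⟨c, hc⟩ := hγsq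
      obtain ⟨I, hI, hγI⟩ :=
        ih hK (by simpa using hγβ) ⟨c * a i, by rw [map_mul, hc, mul_pow, hsq]⟩
      refine ⟨insert i I, Finset.insert_subset_insert i hI, ?_⟩
      rwa [Finset.prod_insert fun h ↦ hi (hI h), ← mul_assoc]

end Multiquadratic

theorem sqrt_in_multiquadratic_general
    {L : Type*} [Field L] (h2 : ringChar L ≠ 2) (k : ℕ)
    (a : Fin k → L) (α : Fin k → AlgebraicClosure L)
    (hsq : ∀ s, (α s) ^ 2 = algebraMap L (AlgebraicClosure L) (a s))
    (hdeg : Module.finrank L (IntermediateField.adjoin L (Set.range α)) = 2 ^ k)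
    (γ : AlgebraicClosure L)
    (hγmem : γ ∈ IntermediateField.adjoin L (Set.range α))
    (hγsq : γ ^ 2 ∈ Set.range (algebraMap L (AlgebraicClosure L))) :
    ∃ I : Finset (Fin k), γ * ∏ s ∈ I, α s ∈ Set.range (algebraMap L (AlgebraicClosure L)) := by
  rw [← Set.image_univ, ← Finset.coe_univ] at hdeg hγmem
  obtain ⟨I, -, hI⟩ := exists_subset_mul_prod_mem_range hsq h2 Finset.univ
    (by rwa [Finset.card_univ, Fintype.card_fin]) hγmem hγsq
  exact ⟨I, hI⟩

theorem sqrt_in_multiquadratic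
    {L : Type*} [Field L] (h2 : ringChar L ≠ 2) (k : ℕ)
    (a : Fin k → L) (α : Fin k → AlgebraicClosure L)
    (hsq : ∀ s, (α s) ^ 2 = algebraMap L (AlgebraicClosure L) (a s))
    (hdeg : Module.finrank L (IntermediateField.adjoin L (Set.range α)) = 2 ^ k)
    (γ : AlgebraicClosure L)
    (hγmem : γ ∈ IntermediateField.adjoin L (Set.range α))
    (hγnot : γ ∉ Set.range (algebraMap L (AlgebraicClosure L)))
    (hγsq : γ ^ 2 ∈ Set.range (algebraMap L (AlgebraicClosure L))) :
    ∃ I : Finset (Fin k), γ * ∏ s ∈ I, α s ∈ Set.range (algebraMap L (AlgebraicClosure L)) :=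
  sqrt_in_multiquadratic_general h2 k a α hsq hdeg γ hγmem hγsq
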